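/- arXiv:1307.6373 — 2 statements merged into one kernel-verified Lean document; each statement's English description precedes it below -/
import Mathlib

section
/- For α > 2, the double integral ∫₀^∞ ∫₀^1 [t^{-2/α}/(1+ts)²] · [1/(1+t(1-s))] ds dt is strictly less than π·csc(2π/α). -/
/-!
Write `c = 2/α ∈ (0,1)`. Since `(1 + ts)(1 + t(1-s)) = 1 + t + t²s(1-s) ≥ 1 + t` and `1 + ts ≥ 1`,
the inner integrand is at most `t^{-c}/(1+t)`, strictly so at `s = 1`; hence the inner integral is
`< t^{-c}/(1+t)` for every `t > 0`. The substitution `t = x/(1-x)` turns `∫₀^∞ t^{-c}/(1+t) dt` into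
the beta integral `B(1-c, c) = Γ(1-c)Γ(c) = π / sin(πc)`.
-/

open Real MeasureTheory Set

lemma ofReal_cpow_mul_one_sub_cpow {p x : ℝ} (hx : x ∈ Icc (0 : ℝ) 1) :
    (x : ℂ) ^ ((p : ℂ) - 1) * (1 - (x : ℂ)) ^ (((1 - p : ℝ) : ℂ) - 1)
      = ((x ^ (p - 1) * (1 - x) ^ (-p) : ℝ) : ℂ) := by
  rw [Complex.ofReal_mul, Complex.ofReal_cpow hx.1, Complex.ofReal_cpow (by linarith [hx.2])]
  push_cast
  ring_nf

theorem integral_rpow_mul_one_sub_rpow_neg {p : ℝ} (hp0 : 0 < p) (hp1 : p < 1) :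
    ∫ x in (0 : ℝ)..1, x ^ (p - 1) * (1 - x) ^ (-p) = π / sin (π * p) := by
  have key := Complex.Gamma_mul_Gamma_eq_betaIntegral (s := (p : ℂ)) (t := ((1 - p : ℝ) : ℂ))
    (by simpa using hp0) (by simpa using sub_pos.2 hp1)
  have hsum : (p : ℂ) + ((1 - p : ℝ) : ℂ) = 1 := by push_cast; ring
  have hbeta : Complex.betaIntegral (p : ℂ) ((1 - p : ℝ) : ℂ)
      = ((∫ x in (0 : ℝ)..1, x ^ (p - 1) * (1 - x) ^ (-p) : ℝ) : ℂ) := by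
    rw [Complex.betaIntegral, ← intervalIntegral.integral_ofReal]
    refine intervalIntegral.integral_congr fun x hx ↦ ?_
    rw [uIcc_of_le zero_le_one] at hx
    exact ofReal_cpow_mul_one_sub_cpow hx
  rw [hsum, Complex.Gamma_one, one_mul, hbeta, Complex.Gamma_ofReal, Complex.Gamma_ofReal,
    ← Complex.ofReal_mul] at key
  rw [← Complex.ofReal_injective key, Real.Gamma_mul_Gamma_one_sub]

lemma integrableOn_rpow_mul_one_sub_rpow_neg {p : ℝ} (hp0 : 0 < p) (hp1 : p < 1) :
    IntegrableOn (fun x : ℝ ↦ x ^ (p - 1) * (1 - x) ^ (-p)) (Ioo 0 1) := by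
  have h : IntegrableOn (fun x : ℝ ↦ (x : ℂ) ^ ((p : ℂ) - 1) * (1 - (x : ℂ)) ^ (((1 - p : ℝ) : ℂ) - 1))
      (Ioc 0 1) := (Complex.betaIntegral_convergent (by simpa using hp0) (by simpa using sub_pos.2 hp1)).1
  refine (IntegrableOn.mono_set h.norm Ioo_subset_Ioc_self).congr_fun (fun x hx ↦ ?_) measurableSet_Ioo
  dsimp only
  rw [ofReal_cpow_mul_one_sub_cpow ⟨hx.1.le, hx.2.le⟩, Complex.norm_real, Real.norm_eq_abs,
    abs_of_nonneg (mul_nonneg (rpow_nonneg hx.1.le _) (rpow_nonneg (by linarith [hx.2]) _))]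

lemma hasDerivWithinAt_div_one_sub {x : ℝ} (hx : x ∈ Ioo (0 : ℝ) 1) :
    HasDerivWithinAt (fun x : ℝ ↦ x / (1 - x)) (1 / (1 - x) ^ 2) (Ioo 0 1) x := by
  have hne : (1 : ℝ) - x ≠ 0 := by linarith [hx.2]
  refine (((hasDerivAt_id' x).div ((hasDerivAt_const x 1).sub (hasDerivAt_id' x)) hne).congr_deriv
    ?_).hasDerivWithinAt
  change (1 * (1 - x) - x * (0 - 1)) / (1 - x) ^ 2 = _
  ring

lemma injOn_div_one_sub : InjOn (fun x : ℝ ↦ x / (1 - x)) (Ioo 0 1) := by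
  intro a ha b hb h
  have h1 : (1 : ℝ) - a ≠ 0 := by linarith [ha.2]
  have h2 : (1 : ℝ) - b ≠ 0 := by linarith [hb.2]
  field_simp at h
  linarith

lemma image_div_one_sub_Ioo : (fun x : ℝ ↦ x / (1 - x)) '' Ioo 0 1 = Ioi 0 := by
  ext t
  constructor
  · rintro ⟨x, hx, rfl⟩
    exact div_pos hx.1 (by linarith [hx.2])
  · intro (ht : 0 < t)
    refine ⟨t / (1 + t), ⟨by positivity, (div_lt_one (by positivity)).2 (by linarith)⟩, ?_⟩
    field_simp
    ring

lemma abs_deriv_smul_rpow_neg_div_one_add {c x : ℝ} (hx : x ∈ Ioo (0 : ℝ) 1) :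
    |1 / (1 - x) ^ 2| • ((x / (1 - x)) ^ (-c) / (1 + x / (1 - x)))
      = x ^ ((1 - c) - 1) * (1 - x) ^ (-(1 - c)) := by
  have h0 : 0 < x := hx.1
  have h1 : 0 < 1 - x := by linarith [hx.2]
  rw [smul_eq_mul, abs_of_pos (by positivity), div_rpow h0.le h1.le, sub_sub_cancel_left,
    neg_sub, rpow_sub h1, rpow_one, rpow_neg h1.le]
  have : (1 - x) ^ c ≠ 0 := by positivity
  field_simp
  ring

theorem integrableOn_rpow_neg_div_one_add {c : ℝ} (hc0 : 0 < c) (hc1 : c < 1) :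
    IntegrableOn (fun t : ℝ ↦ t ^ (-c) / (1 + t)) (Ioi 0) := by
  rw [← image_div_one_sub_Ioo, integrableOn_image_iff_integrableOn_abs_deriv_smul measurableSet_Ioo
    (fun _ ↦ hasDerivWithinAt_div_one_sub) injOn_div_one_sub]
  exact (integrableOn_rpow_mul_one_sub_rpow_neg (sub_pos.2 hc1) (by linarith)).congr_fun
    (fun x hx ↦ (abs_deriv_smul_rpow_neg_div_one_add hx).symm) measurableSet_Ioo

theorem integral_rpow_neg_div_one_add {c : ℝ} (hc0 : 0 < c) (hc1 : c < 1) :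
    ∫ t in Ioi (0 : ℝ), t ^ (-c) / (1 + t) = π / sin (π * c) := by
  rw [← image_div_one_sub_Ioo, integral_image_eq_integral_abs_deriv_smul measurableSet_Ioo
    (fun _ ↦ hasDerivWithinAt_div_one_sub) injOn_div_one_sub,
    setIntegral_congr_fun measurableSet_Ioo (fun _ ↦ abs_deriv_smul_rpow_neg_div_one_add),
    ← integral_Ioc_eq_integral_Ioo, ← intervalIntegral.integral_of_le zero_le_one,
    integral_rpow_mul_one_sub_rpow_neg (sub_pos.2 hc1) (by linarith), mul_sub, mul_one,
    sin_pi_sub]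

theorem setIntegral_lt_setIntegral_of_forall_lt {X : Type*} [MeasurableSpace X] {μ : Measure X}
    {s : Set X} {f g : X → ℝ} (hs : MeasurableSet s) (hμs : μ s ≠ 0) (hf : IntegrableOn f s μ)
    (hg : IntegrableOn g s μ) (hlt : ∀ x ∈ s, f x < g x) :
    ∫ x in s, f x ∂μ < ∫ x in s, g x ∂μ := by
  have hpos : 0 < ∫ x in s, (g x - f x) ∂μ := by
    rw [setIntegral_pos_iff_support_of_nonneg_ae
      ((ae_restrict_iff' hs).2 (ae_of_all _ fun x hx ↦ (sub_pos.2 (hlt x hx)).le)) (hg.sub hf)]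
    refine (pos_iff_ne_zero.2 hμs).trans_le (measure_mono fun x hx ↦ ⟨?_, hx⟩)
    exact (sub_pos.2 (hlt x hx)).ne'
  rwa [integral_sub hg hf, sub_pos] at hpos

lemma one_add_le_sq_mul {t s : ℝ} (ht : 0 ≤ t) (hs : s ∈ Icc (0 : ℝ) 1) :
    1 + t ≤ (1 + t * s) ^ 2 * (1 + t * (1 - s)) := by
  have hts : 0 ≤ t * s := mul_nonneg ht hs.1
  have hprod : 1 + t ≤ (1 + t * s) * (1 + t * (1 - s)) := by
    nlinarith [mul_nonneg hts (mul_nonneg ht (sub_nonneg.2 hs.2))]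
  calc 1 + t ≤ (1 + t * s) * (1 + t * (1 - s)) := hprod
    _ ≤ (1 + t * s) * ((1 + t * s) * (1 + t * (1 - s))) :=
      le_mul_of_one_le_left (by linarith) (by linarith)
    _ = (1 + t * s) ^ 2 * (1 + t * (1 - s)) := by ring

theorem integral_rpow_neg_div_sq_mul_lt {c t : ℝ} (ht : 0 < t) :
    ∫ s in (0 : ℝ)..1, t ^ (-c) / (1 + t * s) ^ 2 * (1 / (1 + t * (1 - s)))
      < t ^ (-c) / (1 + t) := by
  have hcont : ContinuousOn (fun s : ℝ ↦ t ^ (-c) / (1 + t * s) ^ 2 * (1 / (1 + t * (1 - s))))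
      (Icc 0 1) := by
    refine ContinuousOn.mul (ContinuousOn.div (by fun_prop) (by fun_prop) fun s hs ↦ ?_)
      (ContinuousOn.div (by fun_prop) (by fun_prop) fun s hs ↦ ?_)
    · have : 0 < 1 + t * s := by nlinarith [hs.1]
      positivity
    · nlinarith [hs.2]
  have hle : ∀ s ∈ Icc (0 : ℝ) 1,
      t ^ (-c) / (1 + t * s) ^ 2 * (1 / (1 + t * (1 - s))) ≤ t ^ (-c) / (1 + t) := by
    intro s hs
    rw [div_mul_div_comm, mul_one]
    exact div_le_div_of_nonneg_left (by positivity) (by positivity) (one_add_le_sq_mul ht.le hs)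
  have hlt_one : t ^ (-c) / (1 + t * 1) ^ 2 * (1 / (1 + t * (1 - 1))) < t ^ (-c) / (1 + t) := by
    rw [mul_one, sub_self, mul_zero, add_zero, div_one, mul_one]
    exact div_lt_div_of_pos_left (by positivity) (by positivity) (by nlinarith)
  simpa using intervalIntegral.integral_lt_integral_of_continuousOn_of_le_of_exists_lt
    zero_lt_one hcont continuousOn_const (fun s hs ↦ hle s (Ioc_subset_Icc_self hs))
    ⟨1, right_mem_Icc.2 zero_le_one, hlt_one⟩

lemma integral_rpow_neg_div_sq_mul_nonneg {c t : ℝ} (ht : 0 < t) :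
    0 ≤ ∫ s in (0 : ℝ)..1, t ^ (-c) / (1 + t * s) ^ 2 * (1 / (1 + t * (1 - s))) := by
  refine intervalIntegral.integral_nonneg zero_le_one fun s hs ↦ ?_
  have : 0 ≤ 1 + t * (1 - s) := by nlinarith [hs.2]
  positivity

lemma aestronglyMeasurable_integral_rpow_neg_div_sq_mul (c : ℝ) (μ : Measure ℝ) :
    AEStronglyMeasurable
      (fun t : ℝ ↦ ∫ s in (0 : ℝ)..1, t ^ (-c) / (1 + t * s) ^ 2 * (1 / (1 + t * (1 - s)))) μ := by
  simp_rw [intervalIntegral.integral_of_le zero_le_one]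
  refine (StronglyMeasurable.integral_prod_right
    (f := fun t s : ℝ ↦ t ^ (-c) / (1 + t * s) ^ 2 * (1 / (1 + t * (1 - s))))
    (Measurable.stronglyMeasurable ?_)).aestronglyMeasurable
  change Measurable fun p : ℝ × ℝ ↦ p.1 ^ (-c) / (1 + p.1 * p.2) ^ 2 * (1 / (1 + p.1 * (1 - p.2)))
  fun_prop

theorem stmt_8 (α : ℝ) (hα : 2 < α) :
    (∫ t in Set.Ioi (0 : ℝ), ∫ s in (0:ℝ)..1,
        t ^ (-(2 / α)) / (1 + t * s) ^ 2 * (1 / (1 + t * (1 - s))))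
      < π / Real.sin (2 * π / α) := by
  have hc0 : 0 < 2 / α := by positivity
  have hc1 : 2 / α < 1 := by rw [div_lt_one (by linarith)]; linarith
  have hg := integrableOn_rpow_neg_div_one_add hc0 hc1
  have hF : IntegrableOn (fun t : ℝ ↦ ∫ s in (0 : ℝ)..1,
      t ^ (-(2 / α)) / (1 + t * s) ^ 2 * (1 / (1 + t * (1 - s)))) (Ioi 0) := by
    refine hg.mono' (aestronglyMeasurable_integral_rpow_neg_div_sq_mul _ _)
      ((ae_restrict_iff' measurableSet_Ioi).2 (ae_of_all _ fun t (ht : 0 < t) ↦ ?_))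
    rw [Real.norm_eq_abs, abs_of_nonneg (integral_rpow_neg_div_sq_mul_nonneg ht)]
    exact (integral_rpow_neg_div_sq_mul_lt ht).le
  calc _ < ∫ t in Ioi (0 : ℝ), t ^ (-(2 / α)) / (1 + t) :=
        setIntegral_lt_setIntegral_of_forall_lt measurableSet_Ioi (by simp) hF hg
          fun t ht ↦ integral_rpow_neg_div_sq_mul_lt ht
    _ = π / sin (2 * π / α) := by
      rw [integral_rpow_neg_div_one_add hc0 hc1, mul_div_assoc', mul_comm π 2]
end

section
/- Let c > 0, α > 2, and F(s) = exp(-c·s^{2/α}). Writing u = c·s^{2/α}, one has ∑_{k=0}^{3} (-1)^k (s^k/k!) F^{(k)}(s) = (e^{-u}/(3α³)) · (3α³ + 11α²u + 12α·u·(u-1) + 4u·(1 - 3u + u²)). -/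
/-! Put `u = c x^β`. Since `x u' = β u`, differentiating `P(u) e^{-u} / x^k` gives
`Q(u) e^{-u} / x^{k+1}` with `Q = β X (P' - P) - k P`. Hence `x^k F^{(k)}(x) = Q_k(u) e^{-u}`
for polynomials `Q_k` defined by this recursion, the factors `s^k` cancel in the sum, and for
`β = 2/α` the claim reduces to a polynomial identity in `u` and `α`. -/

open Real Finset
open scoped Nat

section

open Polynomial

noncomputable def rpowExpPoly (β : ℝ) : ℕ → ℝ[X]
  | 0 => 1
  | k + 1 => C β * X * (derivative (rpowExpPoly β k) - rpowExpPoly β k) - C (k : ℝ) * rpowExpPoly β k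

theorem hasDerivAt_eval_mul_exp_div_pow (c β : ℝ) (P : ℝ[X]) (k : ℕ) {x : ℝ} (hx : 0 < x) :
    HasDerivAt (fun x => P.eval (c * x ^ β) * exp (-(c * x ^ β)) / x ^ k)
      ((C β * X * (derivative P - P) - C (k : ℝ) * P).eval (c * x ^ β)
        * exp (-(c * x ^ β)) / x ^ (k + 1)) x := by
  have hu : HasDerivAt (fun x => c * x ^ β) (c * (β * (x ^ β / x))) x := by
    rw [← rpow_sub_one hx.ne']
    exact (hasDerivAt_rpow_const (Or.inl hx.ne')).const_mul c
  have hpow : HasDerivAt (fun x => x ^ k) (k * (x ^ k / x)) x := by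
    rcases k with _ | k
    · simpa using hasDerivAt_const x (1 : ℝ)
    · simpa [pow_succ, hx.ne'] using hasDerivAt_pow (k + 1) x
  have h : HasDerivAt (fun x => P.eval (c * x ^ β) * exp (-(c * x ^ β)) / x ^ k) _ x :=
    (((P.hasDerivAt _).comp x hu).mul hu.neg.exp).div hpow (pow_ne_zero k hx.ne')
  convert h using 1
  simp only [Function.comp_apply, Pi.neg_apply, Pi.mul_apply, eval_sub, eval_mul, eval_C, eval_X]
  field_simp
  ring

theorem iteratedDeriv_exp_neg_mul_rpow_eqOn (c β : ℝ) (k : ℕ) :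
    Set.EqOn (iteratedDeriv k fun x => exp (-c * x ^ β))
      (fun x => (rpowExpPoly β k).eval (c * x ^ β) * exp (-(c * x ^ β)) / x ^ k) (Set.Ioi 0) := by
  induction k with
  | zero => intro x _; simp [rpowExpPoly]
  | succ k ih =>
    intro x hx
    have hloc := Filter.eventuallyEq_of_mem (isOpen_Ioi.mem_nhds hx) ih
    rw [iteratedDeriv_succ, hloc.deriv_eq]
    exact (hasDerivAt_eval_mul_exp_div_pow c β _ k hx).deriv

theorem sum_range_four_rpowExpPoly_eval (β u : ℝ) :
    ∑ k ∈ range 4, (-1 : ℝ) ^ k / k ! * (rpowExpPoly β k).eval u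
      = 1 + 11 / 6 * β * u + β ^ 2 * u * (u - 1) + β ^ 3 * u * (1 - 3 * u + u ^ 2) / 6 := by
  simp [sum_range_succ, rpowExpPoly, Nat.factorial]
  ring

end

theorem sum_iteratedDeriv_exp_neg_mul_rpow (c β : ℝ) (n : ℕ) {s : ℝ} (hs : 0 < s) :
    ∑ k ∈ range n, (-1 : ℝ) ^ k * s ^ k / k ! * iteratedDeriv k (fun x => exp (-c * x ^ β)) s
      = exp (-(c * s ^ β)) * ∑ k ∈ range n, (-1 : ℝ) ^ k / k ! * (rpowExpPoly β k).eval (c * s ^ β) := by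
  rw [mul_sum]
  refine sum_congr rfl fun k _ => ?_
  rw [iteratedDeriv_exp_neg_mul_rpow_eqOn c β k hs]
  field_simp

theorem stmt_11_general (c α : ℝ) (hα : 2 < α) (s : ℝ) (hs : 0 < s) :
    ∑ k ∈ range 4, (-1 : ℝ) ^ k * s ^ k / (Nat.factorial k) *
        iteratedDeriv k (fun u : ℝ => Real.exp (-c * u ^ (2 / α))) s
      = Real.exp (-(c * s ^ (2 / α))) / (3 * α ^ 3) *
          (3 * α ^ 3 + 11 * α ^ 2 * (c * s ^ (2 / α))
            + 12 * α * (c * s ^ (2 / α)) * (c * s ^ (2 / α) - 1)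
            + 4 * (c * s ^ (2 / α)) * (1 - 3 * (c * s ^ (2 / α)) + (c * s ^ (2 / α)) ^ 2)) := by
  have hα0 : α ≠ 0 := (zero_lt_two.trans hα).ne'
  rw [sum_iteratedDeriv_exp_neg_mul_rpow c (2 / α) 4 hs, sum_range_four_rpowExpPoly_eval]
  field_simp
  ring

theorem stmt_11 (c α : ℝ) (hc : 0 < c) (hα : 2 < α) (s : ℝ) (hs : 0 < s) :
    ∑ k ∈ range 4, (-1 : ℝ) ^ k * s ^ k / (Nat.factorial k) *
        iteratedDeriv k (fun u : ℝ => Real.exp (-c * u ^ (2 / α))) s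
      = Real.exp (-(c * s ^ (2 / α))) / (3 * α ^ 3) *
          (3 * α ^ 3 + 11 * α ^ 2 * (c * s ^ (2 / α))
            + 12 * α * (c * s ^ (2 / α)) * (c * s ^ (2 / α) - 1)
            + 4 * (c * s ^ (2 / α)) * (1 - 3 * (c * s ^ (2 / α)) + (c * s ^ (2 / α)) ^ 2)) :=
  stmt_11_general c α hα s hs
end
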